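/- For x > 0 and ε > 0, r ∈ ℝ, define I₊(x,ε;r) = ∫₀^∞ e^{(ix-ε)sinh α + 2irα} cosh α dα and I₋(x,ε;r) = ∫₀^∞ e^{(-ix-ε)sinh α - 2irα} cosh α dα. Then both integrals converge absolutely, and lim_{ε→0⁺} (I₊(x,ε;r) + I₋(x,ε;r)) = -(4r/x) e^{-πr} K_{2ir}(x), where K_{2ir}(x) = ∫₀^∞ e^{-x cosh α} cosh(2irα) dα. -/

import Mathlib

open Real MeasureTheory Filter

/-- The integrand of `I₊(x, ε; r)`. -/
noncomputable def Iplus (x ε r : ℝ) : ℂ :=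
  ∫ α in Set.Ioi (0 : ℝ),
    Complex.exp ((Complex.I * x - ε) * Real.sinh α + 2 * Complex.I * r * α) * Real.cosh α

/-- The integrand of `I₋(x, ε; r)`. -/
noncomputable def Iminus (x ε r : ℝ) : ℂ :=
  ∫ α in Set.Ioi (0 : ℝ),
    Complex.exp ((-(Complex.I * x) - ε) * Real.sinh α - 2 * Complex.I * r * α) * Real.cosh α

/-! Integrating by parts against `d(e^{c sinh α}) = c cosh α e^{c sinh α} dα` reduces `I₊` to
`J(c) = ∫₀^∞ e^{c sinh α + 2irα} dα` with `c = ix - ε`. Since `sinh (α + iπ/2) = i cosh α`, moving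
the contour of `J` to the line `Im α = π/2` turns it into `e^{-πr} ∫₀^∞ e^{ic cosh α + 2irα} dα` plus
an integral over the segment `[0, iπ/2]`; the side `Re α = R` vanishes as `R → ∞` because
`Re c < 0 < Im c`. The resulting expression is continuous up to `ε = 0`, and `I₋ = conj I₊`, so the
limit of `I₊ + I₋` is twice the real part of its value at `ε = 0`: the segment term is real and
drops out, and the real part of `∫₀^∞ e^{-x cosh α + 2irα} dα` is `K_{2ir}(x)`. -/

open Set Topology ComplexConjugate
open Complex (I)

section SinhIntegral

variable {c b : ℂ}

lemma tendsto_exp_mul_sinh_atTop {k : ℝ} (hk : k < 0) :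
    Tendsto (fun t => Real.exp (k * Real.sinh t)) atTop (𝓝 0) := by
  refine Real.tendsto_exp_atBot.comp <| (tendsto_const_mul_atBot_of_neg hk).2 ?_
  exact tendsto_atTop_mono' _ ((eventually_ge_atTop 0).mono fun t => Real.self_le_sinh_iff.2)
    tendsto_id

lemma integrableOn_exp_mul_sinh_mul_cosh {k : ℝ} (hk : k < 0) :
    IntegrableOn (fun t => Real.exp (k * Real.sinh t) * Real.cosh t) (Ioi 0) := by
  refine integrableOn_Ioi_deriv_of_nonneg' (g := fun t => Real.exp (k * Real.sinh t) / k)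
    (fun t _ => ?_) (fun t _ => by positivity) (l := 0) ?_
  · exact (((Real.hasDerivAt_sinh t).const_mul k).exp.div_const k).congr_deriv
      (by field_simp [hk.ne])
  · simpa using (tendsto_exp_mul_sinh_atTop hk).div_const k

lemma norm_exp_mul_sinh_add_mul_le (hb : b.re ≤ 0) {t : ℝ} (ht : 0 ≤ t) :
    ‖Complex.exp (c * Real.sinh t + b * t)‖ ≤ Real.exp (c.re * Real.sinh t) := by
  simp only [Complex.norm_exp, Complex.add_re, Complex.mul_re, Complex.ofReal_re,
    Complex.ofReal_im, mul_zero, sub_zero]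
  exact Real.exp_le_exp.2 (by nlinarith)

lemma integrableOn_exp_mul_sinh_add_mul (hc : c.re < 0) (hb : b.re ≤ 0) :
    IntegrableOn (fun t : ℝ => Complex.exp (c * Real.sinh t + b * t)) (Ioi 0) := by
  refine (integrableOn_exp_mul_Ioi hc 0).mono' (by fun_prop)
    (ae_restrict_of_forall_mem measurableSet_Ioi fun t (ht : 0 < t) => ?_)
  refine (norm_exp_mul_sinh_add_mul_le hb ht.le).trans (Real.exp_le_exp.2 ?_)
  nlinarith [Real.self_le_sinh_iff.2 ht.le]

lemma integrableOn_exp_mul_sinh_add_mul_mul_cosh (hc : c.re < 0) (hb : b.re ≤ 0) :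
    IntegrableOn (fun t : ℝ => Complex.exp (c * Real.sinh t + b * t) * Real.cosh t) (Ioi 0) := by
  refine (integrableOn_exp_mul_sinh_mul_cosh hc).mono' (by fun_prop)
    (ae_restrict_of_forall_mem measurableSet_Ioi fun t (ht : 0 < t) => ?_)
  rw [norm_mul, Complex.norm_real, Real.norm_of_nonneg (Real.cosh_pos t).le]
  gcongr
  exact norm_exp_mul_sinh_add_mul_le hb ht.le

lemma integral_exp_mul_sinh_add_mul_mul_cosh (hc : c.re < 0) (hb : b.re ≤ 0) :
    ∫ t in Ioi (0 : ℝ), Complex.exp (c * Real.sinh t + b * t) * Real.cosh t =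
      -c⁻¹ - b * c⁻¹ * ∫ t in Ioi (0 : ℝ), Complex.exp (c * Real.sinh t + b * t) := by
  have hc0 : c ≠ 0 := fun h => by simp [h] at hc
  have hsplit : ∀ t : ℝ, Complex.exp (c * Real.sinh t + b * t) =
      Complex.exp (b * t) * Complex.exp (c * Real.sinh t) := fun t => by
    rw [← Complex.exp_add, add_comm]
  have hu : ∀ t ∈ Ioi (0 : ℝ),
      HasDerivAt (fun t : ℝ => Complex.exp (b * t)) (b * Complex.exp (b * t)) t := fun t _ => by
    simpa [mul_comm] using ((hasDerivAt_id (t : ℂ)).const_mul b).cexp.comp_ofReal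
  have hv : ∀ t ∈ Ioi (0 : ℝ), HasDerivAt (fun t : ℝ => Complex.exp (c * Real.sinh t) / c)
      (Complex.exp (c * Real.sinh t) * Real.cosh t) t := fun t _ =>
    ((((Real.hasDerivAt_sinh t).ofReal_comp).const_mul c).cexp.div_const c).congr_deriv
      (by field_simp)
  have huv' := integrableOn_exp_mul_sinh_add_mul_mul_cosh hc hb
  have hu'v : IntegrableOn (fun t : ℝ => b * c⁻¹ * Complex.exp (c * Real.sinh t + b * t))
      (Ioi 0) := (integrableOn_exp_mul_sinh_add_mul hc hb).const_mul _
  have hzero : Tendsto (fun t : ℝ => Complex.exp (b * t) * (Complex.exp (c * Real.sinh t) / c))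
      (𝓝[>] 0) (𝓝 c⁻¹) := by
    have hcont : Continuous fun t : ℝ =>
        Complex.exp (b * t) * (Complex.exp (c * Real.sinh t) / c) := by fun_prop
    simpa using (hcont.tendsto 0).mono_left nhdsWithin_le_nhds
  have hinfty : Tendsto (fun t : ℝ => Complex.exp (b * t) * (Complex.exp (c * Real.sinh t) / c))
      atTop (𝓝 0) := by
    refine squeeze_zero_norm' ?_
      (by simpa using (tendsto_exp_mul_sinh_atTop hc).mul_const ‖c⁻¹‖)
    filter_upwards [eventually_ge_atTop 0] with t ht
    rw [mul_div_assoc', ← hsplit, div_eq_mul_inv, norm_mul, norm_inv]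
    gcongr
    exact norm_exp_mul_sinh_add_mul_le hb ht
  have hparts := integral_Ioi_mul_deriv_eq_deriv_mul hu hv ?_ ?_ hzero hinfty
  · simp only [hsplit, mul_assoc] at hparts ⊢
    rw [hparts, zero_sub, ← integral_const_mul, ← integral_const_mul]
    congr 1
    exact integral_congr_ae (ae_of_all _ fun t => by ring)
  · exact huv'.congr_fun (fun t _ => by simp only [Pi.mul_apply, hsplit]; ring) measurableSet_Ioi
  · exact hu'v.congr_fun (fun t _ => by simp only [Pi.mul_apply, hsplit]; ring) measurableSet_Ioi

end SinhIntegral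

lemma integral_eq_of_differentiable_rect {f : ℂ → ℂ} (hf : Differentiable ℂ f) (R h : ℝ) :
    ∫ t in (0 : ℝ)..R, f t = (∫ t in (0 : ℝ)..R, f (t + h * I)) +
      I * (∫ y in (0 : ℝ)..h, f (y * I)) - I * ∫ y in (0 : ℝ)..h, f (R + y * I) := by
  have := Complex.integral_boundary_rect_eq_zero_of_differentiableOn f 0 (R + h * I)
    hf.differentiableOn
  simp only [Complex.zero_re, Complex.zero_im, Complex.add_re, Complex.add_im,
    Complex.ofReal_re, Complex.ofReal_im, Complex.mul_re, Complex.mul_im, Complex.I_re,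
    Complex.I_im, mul_zero, mul_one, zero_mul, sub_zero, zero_add, add_zero,
    Complex.ofReal_zero, smul_eq_mul] at this
  linear_combination this

noncomputable def coshExpIntegral (c b : ℂ) : ℂ :=
  ∫ t in Ioi (0 : ℝ), Complex.exp (c * Real.cosh t + b * t)

noncomputable def sinExpIntegral (c b : ℂ) : ℂ :=
  ∫ t in (0 : ℝ)..π / 2, Complex.exp ((c * Real.sin t + b * t) * I)

section ContourShift

variable {c b : ℂ}

lemma norm_exp_mul_cosh_add_mul_le {k : ℝ} (hck : c.re ≤ k) (hk : k ≤ 0) (hb : b.re ≤ 0) {t : ℝ}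
    (ht : 0 ≤ t) : ‖Complex.exp (c * Real.cosh t + b * t)‖ ≤ Real.exp (k * t) := by
  simp only [Complex.norm_exp, Complex.add_re, Complex.mul_re, Complex.ofReal_re,
    Complex.ofReal_im, mul_zero, sub_zero]
  have : t ≤ Real.cosh t := (Real.self_le_sinh_iff.2 ht).trans (Real.sinh_lt_cosh t).le
  exact Real.exp_le_exp.2 (by nlinarith [Real.cosh_pos t])

lemma integrableOn_exp_mul_cosh_add_mul (hc : c.re < 0) (hb : b.re ≤ 0) :
    IntegrableOn (fun t : ℝ => Complex.exp (c * Real.cosh t + b * t)) (Ioi 0) :=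
  (integrableOn_exp_mul_Ioi hc 0).mono' (by fun_prop)
    (ae_restrict_of_forall_mem measurableSet_Ioi fun _ ht =>
      norm_exp_mul_cosh_add_mul_le le_rfl hc.le hb (le_of_lt ht))

lemma exp_mul_sinh_add_mul_add_pi_div_two_mul_I (t : ℝ) :
    Complex.exp (c * Complex.sinh (t + (π / 2 : ℝ) * I) + b * (t + (π / 2 : ℝ) * I)) =
      Complex.exp (b * (π / 2 : ℝ) * I) * Complex.exp (c * I * Real.cosh t + b * t) := by
  rw [Complex.sinh_add, Complex.sinh_mul_I, Complex.cosh_mul_I, ← Complex.ofReal_sin,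
    ← Complex.ofReal_cos, Real.sin_pi_div_two, Real.cos_pi_div_two, ← Complex.exp_add,
    Complex.ofReal_cosh]
  push_cast
  ring_nf

lemma exp_mul_sinh_add_mul_mul_I (y : ℝ) :
    Complex.exp (c * Complex.sinh (y * I) + b * (y * I)) =
      Complex.exp ((c * Real.sin y + b * y) * I) := by
  rw [Complex.sinh_mul_I, Complex.ofReal_sin]
  ring_nf

lemma norm_exp_mul_sinh_add_mul_vertical_le (hc : c.re < 0) (hc' : 0 < c.im) (hb : b.re ≤ 0)
    {R y : ℝ} (hR : 0 ≤ R) (hy : y ∈ Icc 0 (π / 2)) :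
    ‖Complex.exp (c * Complex.sinh (R + y * I) + b * (R + y * I))‖ ≤
      Real.exp (|b.im| * (π / 2)) * Real.exp (-min (-c.re) c.im * Real.sinh R) := by
  obtain ⟨hy0, hy1⟩ := hy
  rw [Complex.norm_exp, ← Real.exp_add, Complex.sinh_add, Complex.sinh_mul_I,
    Complex.cosh_mul_I]
  simp only [Complex.add_re, Complex.mul_re, Complex.mul_im, Complex.add_im, Complex.ofReal_re,
    Complex.ofReal_im, Complex.I_re, Complex.I_im, Complex.sinh_ofReal_re, Complex.sinh_ofReal_im,
    Complex.cosh_ofReal_re, Complex.cosh_ofReal_im, Complex.sin_ofReal_re, Complex.sin_ofReal_im,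
    Complex.cos_ofReal_re, Complex.cos_ofReal_im, mul_zero, zero_mul, mul_one, sub_zero,
    add_zero, zero_add]
  refine Real.exp_le_exp.2 ?_
  set m := min (-c.re) c.im
  have hsin : 0 ≤ Real.sin y := Real.sin_nonneg_of_nonneg_of_le_pi hy0 (by linarith [Real.pi_pos])
  have hcos : 0 ≤ Real.cos y := Real.cos_nonneg_of_mem_Icc ⟨by linarith [Real.pi_pos], hy1⟩
  have hsin_add_cos : 1 ≤ Real.sin y + Real.cos y := by
    nlinarith [Real.sin_sq_add_cos_sq y, Real.sin_le_one y, Real.cos_le_one y]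
  have hsinh : 0 ≤ Real.sinh R := Real.sinh_nonneg_iff.2 hR
  have hcosh : Real.sinh R ≤ Real.cosh R := (Real.sinh_lt_cosh R).le
  have hm0 : 0 ≤ m := le_min (by linarith) hc'.le
  have hmre : m ≤ -c.re := min_le_left _ _
  have hmim : m ≤ c.im := min_le_right _ _
  have hby : -(b.im * y) ≤ |b.im| * (π / 2) := by
    nlinarith [neg_abs_le b.im, abs_nonneg b.im]
  nlinarith [mul_nonneg hsinh hcos, mul_nonneg hsinh hsin, mul_nonneg hm0 hsinh,
    mul_nonneg (sub_nonneg.2 hcosh) hsin,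
    mul_nonneg (sub_nonneg.2 hmre) (mul_nonneg hsinh hcos),
    mul_nonneg (sub_nonneg.2 hmim) (mul_nonneg hsinh hsin),
    mul_nonneg hm0 (mul_nonneg (sub_nonneg.2 hcosh) hsin)]

lemma tendsto_integral_exp_mul_sinh_add_mul_vertical (hc : c.re < 0) (hc' : 0 < c.im)
    (hb : b.re ≤ 0) :
    Tendsto (fun R : ℝ => ∫ y in (0 : ℝ)..π / 2,
      Complex.exp (c * Complex.sinh (R + y * I) + b * (R + y * I))) atTop (𝓝 0) := by
  have hm : -min (-c.re) c.im < 0 := neg_neg_of_pos (lt_min (by linarith) hc')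
  refine squeeze_zero_norm' ?_ (by simpa using
    ((tendsto_exp_mul_sinh_atTop hm).const_mul (Real.exp (|b.im| * (π / 2)))).mul_const (π / 2))
  filter_upwards [eventually_ge_atTop 0] with R hR
  have hpi : (0 : ℝ) ≤ π / 2 := by positivity
  refine (intervalIntegral.norm_integral_le_of_norm_le_const fun y hy => ?_).trans_eq
    (by rw [sub_zero, abs_of_nonneg hpi])
  rw [Set.uIoc_of_le hpi] at hy
  simpa using norm_exp_mul_sinh_add_mul_vertical_le hc hc' hb hR (Ioc_subset_Icc_self hy)

theorem integral_exp_mul_sinh_add_mul_eq (hc : c.re < 0) (hc' : 0 < c.im) (hb : b.re ≤ 0) :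
    ∫ t in Ioi (0 : ℝ), Complex.exp (c * Real.sinh t + b * t) =
      Complex.exp (b * (π / 2 : ℝ) * I) * coshExpIntegral (c * I) b + I * sinExpIntegral c b := by
  set f : ℂ → ℂ := fun z => Complex.exp (c * Complex.sinh z + b * z)
  have hf : Differentiable ℂ f := by fun_prop
  have hbottom : Tendsto (fun R : ℝ => ∫ t in (0 : ℝ)..R, f t) atTop
      (𝓝 (∫ t in Ioi (0 : ℝ), Complex.exp (c * Real.sinh t + b * t))) := by
    simpa [f, Complex.ofReal_sinh] using
      intervalIntegral_tendsto_integral_Ioi 0 (integrableOn_exp_mul_sinh_add_mul hc hb) tendsto_id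
  have htop : Tendsto (fun R : ℝ => ∫ t in (0 : ℝ)..R, f (t + (π / 2 : ℝ) * I)) atTop
      (𝓝 (Complex.exp (b * (π / 2 : ℝ) * I) * coshExpIntegral (c * I) b)) := by
    have hcI : (c * I).re < 0 := by simpa using hc'
    simp only [f, exp_mul_sinh_add_mul_add_pi_div_two_mul_I, intervalIntegral.integral_const_mul]
    exact (intervalIntegral_tendsto_integral_Ioi 0 (integrableOn_exp_mul_cosh_add_mul hcI hb)
      tendsto_id).const_mul _
  have hleft : ∫ y in (0 : ℝ)..π / 2, f (y * I) = sinExpIntegral c b := by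
    simp only [f, exp_mul_sinh_add_mul_mul_I, sinExpIntegral]
  have hrect := (htop.add_const (I * sinExpIntegral c b)).sub
    ((tendsto_integral_exp_mul_sinh_add_mul_vertical hc hc' hb).const_mul I)
  rw [mul_zero, sub_zero] at hrect
  refine tendsto_nhds_unique hbottom (hrect.congr fun R => ?_)
  rw [integral_eq_of_differentiable_rect hf R (π / 2), hleft]

end ContourShift

section BoundaryValue

variable {b : ℂ}

lemma continuousAt_coshExpIntegral (hb : b.re ≤ 0) {c₀ : ℂ} (hc₀ : c₀.re < 0) :
    ContinuousAt (fun c => coshExpIntegral c b) c₀ := by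
  have hk : c₀.re / 2 < 0 := by linarith
  refine continuousAt_of_dominated (bound := fun t => Real.exp (c₀.re / 2 * t))
    (Eventually.of_forall fun c => (by fun_prop : Continuous _).aestronglyMeasurable) ?_
    (integrableOn_exp_mul_Ioi hk 0) (ae_of_all _ fun t => by fun_prop)
  filter_upwards [(Complex.continuous_re.tendsto c₀).eventually (gt_mem_nhds (by linarith) :
    ∀ᶠ x in 𝓝 c₀.re, x < c₀.re / 2)] with c hc
  exact ae_restrict_of_forall_mem measurableSet_Ioi fun t ht =>
    norm_exp_mul_cosh_add_mul_le hc.le hk.le hb (le_of_lt ht)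

lemma continuous_sinExpIntegral : Continuous fun c => sinExpIntegral c b :=
  intervalIntegral.continuous_parametric_intervalIntegral_of_continuous' (by fun_prop) _ _

/-- The value at `c₀` of the continuous extension of `c ↦ ∫₀^∞ e^{c sinh t + bt} cosh t dt` from the
quadrant `Re c < 0 < Im c`: integration by parts followed by the contour shift. -/
noncomputable def sinhExpBoundaryValue (c b : ℂ) : ℂ :=
  -c⁻¹ - b * c⁻¹ *
    (Complex.exp (b * (π / 2 : ℝ) * I) * coshExpIntegral (c * I) b + I * sinExpIntegral c b)

lemma tendsto_integral_exp_mul_sinh_add_mul_mul_cosh (hb : b.re ≤ 0) {c₀ : ℂ}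
    (hc₀ : 0 < c₀.im) :
    Tendsto (fun c => ∫ t in Ioi (0 : ℝ), Complex.exp (c * Real.sinh t + b * t) * Real.cosh t)
      (𝓝[{c | c.re < 0 ∧ 0 < c.im}] c₀) (𝓝 (sinhExpBoundaryValue c₀ b)) := by
  have hc₀0 : c₀ ≠ 0 := fun h => by simp [h] at hc₀
  have hH : ContinuousAt (fun c => coshExpIntegral (c * I) b) c₀ :=
    (continuousAt_coshExpIntegral hb (by simpa using hc₀)).comp
      (continuous_mul_const I).continuousAt
  have hcont : ContinuousAt (sinhExpBoundaryValue · b) c₀ := by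
    unfold sinhExpBoundaryValue
    have := continuous_sinExpIntegral (b := b)
    fun_prop (disch := assumption)
  refine (hcont.tendsto.mono_left nhdsWithin_le_nhds).congr' ?_
  filter_upwards [self_mem_nhdsWithin] with c ⟨hc, hc'⟩
  rw [integral_exp_mul_sinh_add_mul_mul_cosh hc hb, integral_exp_mul_sinh_add_mul_eq hc hc' hb,
    sinhExpBoundaryValue]

end BoundaryValue

lemma conj_coshExpIntegral (c b : ℂ) :
    conj (coshExpIntegral c b) = coshExpIntegral (conj c) (conj b) := by
  simp only [coshExpIntegral, ← integral_conj, ← Complex.exp_conj, map_add, map_mul,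
    Complex.conj_ofReal]

lemma conj_sinExpIntegral (c b : ℂ) :
    conj (sinExpIntegral c b) = sinExpIntegral (-conj c) (-conj b) := by
  simp only [sinExpIntegral, intervalIntegral.integral_of_le (by positivity : (0 : ℝ) ≤ π / 2),
    ← integral_conj, ← Complex.exp_conj]
  congr 1 with t
  simp only [map_add, map_mul, Complex.conj_ofReal, Complex.conj_I]
  ring_nf

lemma integral_exp_mul_cosh_mul_cosh {a b : ℂ} (ha : a.re < 0) (hb : b.re = 0) :
    ∫ t in Ioi (0 : ℝ), Complex.exp (a * Real.cosh t) * Complex.cosh (b * t) =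
      (coshExpIntegral a b + coshExpIntegral a (-b)) / 2 := by
  rw [coshExpIntegral, coshExpIntegral, ← integral_add
    (integrableOn_exp_mul_cosh_add_mul ha hb.le)
    (integrableOn_exp_mul_cosh_add_mul ha (by simp [hb])), ← integral_div]
  congr 1 with t
  rw [Complex.cosh, Complex.exp_add, Complex.exp_add, neg_mul]
  ring

lemma Iminus_eq_conj_Iplus (x ε r : ℝ) : Iminus x ε r = conj (Iplus x ε r) := by
  simp only [Iplus, Iminus, ← integral_conj, map_mul, ← Complex.exp_conj]
  congr 1 with α
  simp only [map_add, map_sub, map_mul, map_ofNat, Complex.conj_ofReal, Complex.conj_I]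
  ring_nf

lemma tendsto_Iplus (r : ℝ) {x : ℝ} (hx : 0 < x) :
    Tendsto (fun ε => Iplus x ε r) (𝓝[>] 0) (𝓝 (sinhExpBoundaryValue (I * x) (2 * I * r))) := by
  refine (tendsto_integral_exp_mul_sinh_add_mul_mul_cosh (by simp) (by simpa using hx)).comp ?_
  refine tendsto_nhdsWithin_iff.2 ⟨?_, ?_⟩
  · have : Continuous fun ε : ℝ => I * x - ε := by fun_prop
    simpa using (this.tendsto 0).mono_left nhdsWithin_le_nhds
  · filter_upwards [self_mem_nhdsWithin] with ε (hε : 0 < ε)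
    simp [hε, hx]

lemma sinhExpBoundaryValue_add_conj (r : ℝ) {x : ℝ} (hx : x ≠ 0) :
    sinhExpBoundaryValue (I * x) (2 * I * r) + conj (sinhExpBoundaryValue (I * x) (2 * I * r)) =
      -(4 * r / x) * Real.exp (-π * r) *
        ((coshExpIntegral (-x) (2 * I * r) + coshExpIntegral (-x) (-(2 * I * r))) / 2) := by
  have hexp : Complex.exp (2 * I * r * (π / 2 : ℝ) * I) = Real.exp (-π * r) := by
    rw [Complex.ofReal_exp]
    push_cast
    ring_nf
    simp
  have hsin : conj (sinExpIntegral (I * x) (2 * I * r)) = sinExpIntegral (I * x) (2 * I * r) := by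
    simp [conj_sinExpIntegral, map_ofNat]
  rw [sinhExpBoundaryValue, hexp, show I * x * I = -x by ring_nf; simp]
  simp only [map_sub, map_mul, map_neg, map_inv₀, map_add, Complex.conj_ofReal, Complex.conj_I,
    map_ofNat, conj_coshExpIntegral, hsin]
  have hx' : (x : ℂ) ≠ 0 := by exact_mod_cast hx
  field_simp
  ring_nf

theorem stmt_17 (x r : ℝ) (hx : 0 < x) :
    (∀ ε : ℝ, 0 < ε →
      IntegrableOn (fun α : ℝ =>
        Complex.exp ((Complex.I * x - ε) * Real.sinh α + 2 * Complex.I * r * α) *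
          Real.cosh α) (Set.Ioi 0) ∧
      IntegrableOn (fun α : ℝ =>
        Complex.exp ((-(Complex.I * x) - ε) * Real.sinh α - 2 * Complex.I * r * α) *
          Real.cosh α) (Set.Ioi 0)) ∧
    Tendsto (fun ε : ℝ => Iplus x ε r + Iminus x ε r) (nhdsWithin 0 (Set.Ioi 0))
      (nhds (-(4 * r / x) * Real.exp (-π * r) *
        ∫ α in Set.Ioi (0 : ℝ),
          Complex.exp (-x * Real.cosh α) * Complex.cosh (2 * Complex.I * r * α))) := by
  refine ⟨fun ε hε => ⟨?_, ?_⟩, ?_⟩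
  · exact integrableOn_exp_mul_sinh_add_mul_mul_cosh (by simpa using hε) (by simp)
  · simpa [sub_eq_add_neg] using integrableOn_exp_mul_sinh_add_mul_mul_cosh
      (c := -(I * x) - ε) (b := -(2 * I * r)) (by simpa using hε) (by simp)
  · have hplus := tendsto_Iplus r hx
    have hminus := (Complex.continuous_conj.tendsto _).comp hplus
    rw [integral_exp_mul_cosh_mul_cosh (by simpa using hx) (by simp),
      ← sinhExpBoundaryValue_add_conj r hx.ne']
    simp only [Iminus_eq_conj_Iplus]
    exact hplus.add hminus
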